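/- Let Γ₁ ⊇ Γ₂ ⊇ ⋯ be a nested sequence of lattices in H₃(ℝ) such that each Γ_n is a normal subgroup of Γ₁ and ⋂_{n≥1} Γ_n = {1}. Then ⋂_{n≥1} p(Γ_n) = {0}. -/

import Mathlib

open MeasureTheory

/-- The real Heisenberg group `H₃(ℝ)`: `ℝ³` with
`(a,b,c)·(a′,b′,c′) = (a+a′, b+b′, c+c′+a·b′)`. -/
@[ext] structure H3 : Type where
  x : ℝ
  y : ℝ
  z : ℝ

namespace H3

instance : Mul H3 := ⟨fun g h => ⟨g.x + h.x, g.y + h.y, g.z + h.z + g.x * h.y⟩⟩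
instance : One H3 := ⟨⟨0, 0, 0⟩⟩
instance : Inv H3 := ⟨fun g => ⟨-g.x, -g.y, -g.z + g.x * g.y⟩⟩

@[simp] lemma mul_x (g h : H3) : (g * h).x = g.x + h.x := rfl
@[simp] lemma mul_y (g h : H3) : (g * h).y = g.y + h.y := rfl
@[simp] lemma mul_z (g h : H3) : (g * h).z = g.z + h.z + g.x * h.y := rfl
@[simp] lemma one_x : (1 : H3).x = 0 := rfl
@[simp] lemma one_y : (1 : H3).y = 0 := rfl
@[simp] lemma one_z : (1 : H3).z = 0 := rfl
@[simp] lemma inv_x (g : H3) : g⁻¹.x = -g.x := rfl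
@[simp] lemma inv_y (g : H3) : g⁻¹.y = -g.y := rfl
@[simp] lemma inv_z (g : H3) : g⁻¹.z = -g.z + g.x * g.y := rfl

instance : Group H3 where
  mul_assoc a b c := by ext <;> simp <;> ring
  one_mul a := by ext <;> simp
  mul_one a := by ext <;> simp
  inv_mul_cancel a := by ext <;> simp

/-- The Euclidean topology on `H₃(ℝ)`. -/
instance : TopologicalSpace H3 :=
  TopologicalSpace.induced (fun g => (g.x, g.y, g.z)) inferInstance

instance : MeasurableSpace H3 := borel H3

/-- `a(t)`. -/
def Ha (t : ℝ) : H3 := ⟨t, 0, 0⟩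
/-- `b(t)`. -/
def Hb (t : ℝ) : H3 := ⟨0, t, 0⟩
/-- `c(t)`, the center. -/
def Hc (t : ℝ) : H3 := ⟨0, 0, t⟩

/-- The projection `p : H₃(ℝ) → ℝ²`. -/
def pmap (g : H3) : ℝ × ℝ := (g.x, g.y)

/-- The kernel of `p`, i.e. the center of `H₃(ℝ)`, as a subgroup. -/
def pKer : Subgroup H3 where
  carrier := {g | g.x = 0 ∧ g.y = 0}
  one_mem' := ⟨rfl, rfl⟩
  mul_mem' := by
    rintro a b ⟨ha1, ha2⟩ ⟨hb1, hb2⟩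
    exact ⟨by simp [ha1, hb1], by simp [ha2, hb2]⟩
  inv_mem' := by
    rintro a ⟨ha1, ha2⟩
    exact ⟨by simp [ha1], by simp [ha2]⟩

/-- A lattice in `H₃(ℝ)`: a discrete subgroup with compact quotient. -/
def IsLattice (Γ : Subgroup H3) : Prop :=
  DiscreteTopology Γ ∧ CompactSpace (H3 ⧸ Γ)

/-- `k_Γ`: the index of the commutator subgroup `[Γ,Γ]` in `Γ ∩ ker p`. -/
noncomputable def kIdx (Γ : Subgroup H3) : ℕ :=
  Subgroup.relIndex ⁅Γ, Γ⁆ (Γ ⊓ pKer)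

/-- The integer lattice `ℤ² ⊆ ℝ²`. -/
def intLattice : Set (ℝ × ℝ) := {v | ∃ m n : ℤ, v = ((m : ℝ), (n : ℝ))}

/-- The action of a `2×2` matrix on `ℝ²`. -/
def matVec (A : Matrix (Fin 2) (Fin 2) ℝ) (v : ℝ × ℝ) : ℝ × ℝ :=
  (A 0 0 * v.1 + A 0 1 * v.2, A 1 0 * v.1 + A 1 1 * v.2)

/-- The dual of a subset of `ℝ²`:
all vectors pairing integrally with every element of `S`. -/
def dualSet (S : Set (ℝ × ℝ)) : Set (ℝ × ℝ) :=
  {v | ∀ w ∈ S, ∃ n : ℤ, v.1 * w.1 + v.2 * w.2 = (n : ℝ)}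

end H3

open H3

/-- Proposition 3.4: if `Γ₁ ⊇ Γ₂ ⊇ ⋯` are lattices in `H₃(ℝ)`, each normal in `Γ₁`,
with `⋂ Γ_n = {1}`, then `⋂ p(Γ_n) = {0}`. -/
theorem normal_free_inter_pmap_trivial
    (Γ : ℕ → Subgroup H3) (hlat : ∀ n, IsLattice (Γ n)) (hnest : ∀ n, Γ (n + 1) ≤ Γ n)
    (hnorm : ∀ n, ∀ γ ∈ Γ 0, ∀ g ∈ Γ n, γ * g * γ⁻¹ ∈ Γ n)
    (htriv : (⋂ n, (Γ n : Set H3)) = {1}) :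
    (⋂ n, pmap '' (Γ n : Set H3)) = {(0, 0)} := by
  apply Set.eq_singleton_iff_unique_mem.mpr
  constructor
  · exact Set.mem_iInter.mpr fun n => ⟨1, (Γ n).one_mem, rfl⟩
  · intro v hv
    by_contra hne
    -- Step 1: every γ ∈ Γ 0 satisfies γ.x * v.2 - γ.y * v.1 = 0
    have key : ∀ γ ∈ Γ 0, γ.x * v.2 - γ.y * v.1 = 0 := by
      intro γ hγ
      have hc : Hc (γ.x * v.2 - γ.y * v.1) ∈ ⋂ n, (Γ n : Set H3) := by
        refine Set.mem_iInter.mpr fun n => ?_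
        obtain ⟨g, hg, hpg⟩ := Set.mem_iInter.mp hv n
        have hmem : γ * g * γ⁻¹ * g⁻¹ ∈ Γ n :=
          mul_mem (hnorm n γ hγ g hg) (inv_mem hg)
        have h1 : g.x = v.1 := congrArg Prod.fst hpg
        have h2 : g.y = v.2 := congrArg Prod.snd hpg
        have heq : γ * g * γ⁻¹ * g⁻¹ = Hc (γ.x * v.2 - γ.y * v.1) := by
          ext <;> simp [Hc, h1, h2] <;> ring
        exact heq ▸ hmem
      rw [htriv] at hc
      have hz := congrArg H3.z (Set.mem_singleton_iff.mp hc)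
      simpa [Hc] using hz
    -- Step 2: the continuous homomorphism f vanishing on Γ 0
    set f : H3 → ℝ := fun g => g.x * v.2 - g.y * v.1 with hf
    have he : Continuous (fun g : H3 => (g.x, g.y, g.z)) := continuous_induced_dom
    have hcx : Continuous fun g : H3 => g.x := continuous_fst.comp he
    have hcy : Continuous fun g : H3 => g.y :=
      continuous_fst.comp (continuous_snd.comp he)
    have hfc : Continuous f := (hcx.mul continuous_const).sub (hcy.mul continuous_const)
    have hresp : ∀ a b : H3, (QuotientGroup.leftRel (Γ 0)) a b → f a = f b := by
      intro a b hab
      have hmem : a⁻¹ * b ∈ Γ 0 := QuotientGroup.leftRel_apply.mp hab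
      have h0 := key _ hmem
      simp only [mul_x, mul_y, inv_x, inv_y] at h0
      simp only [hf]
      linarith
    let F : H3 ⧸ (Γ 0) → ℝ := Quotient.lift f hresp
    have hFc : Continuous F := hfc.quotient_lift hresp
    haveI : CompactSpace (H3 ⧸ (Γ 0)) := (hlat 0).2
    have hK : IsCompact (Set.range F) := isCompact_range hFc
    -- Step 3: F is surjective since v ≠ 0
    have hvne : v.1 ≠ 0 ∨ v.2 ≠ 0 := by
      by_contra h
      push_neg at h
      exact hne (Prod.ext_iff.mpr ⟨h.1, h.2⟩)
    have hpos : 0 < v.1 ^ 2 + v.2 ^ 2 := by rcases hvne with h | h <;> positivity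
    have hsurj : Function.Surjective F := by
      intro r
      refine ⟨QuotientGroup.mk ⟨r / (v.1 ^ 2 + v.2 ^ 2) * v.2,
        -(r / (v.1 ^ 2 + v.2 ^ 2)) * v.1, 0⟩, ?_⟩
      show f _ = r
      simp only [hf]
      field_simp
      ring
    exact noncompact_univ ℝ (Set.range_eq_univ.mpr hsurj ▸ hK)
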